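/- arXiv:0709.2356 — 2 statements merged into one kernel-verified Lean document; each statement's English description precedes it below -/
import Mathlib

section
/- If Λ : R^n → C(n) is a real-linear map with n ≥ 2 and D_L Λ := ∑_j e_j Λ(u_j) = 0 (where u_j is the j-th standard basis vector), then Λ is uniquely determined by its restriction to any hyperplane H ⊆ R^n: if Λ_1, Λ_2 both satisfy the condition and agree on H, then Λ_1 = Λ_2. -/
noncomputable def Qneg (n : ℕ) : QuadraticForm ℝ (Fin n → ℝ) :=
  QuadraticMap.weightedSumSquares ℝ (fun _ : Fin n => (-1 : ℝ))

/-- A linear map `Λ : ℝⁿ → C(n)` with `D_L Λ = ∑ⱼ eⱼ Λ(uⱼ) = 0` is uniquely determined by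
its restriction to any hyperplane. -/
theorem linear_diracL_determined_by_hyperplane {n : ℕ} (hn : 2 ≤ n)
    (H : Submodule ℝ (Fin n → ℝ)) (hH : Module.finrank ℝ H = n - 1)
    (Λ₁ Λ₂ : (Fin n → ℝ) →ₗ[ℝ] CliffordAlgebra (Qneg n))
    (h₁ : ∑ j, CliffordAlgebra.ι (Qneg n) (Pi.single j 1) * Λ₁ (Pi.single j 1) = 0)
    (h₂ : ∑ j, CliffordAlgebra.ι (Qneg n) (Pi.single j 1) * Λ₂ (Pi.single j 1) = 0)
    (hagree : ∀ v ∈ H, Λ₁ v = Λ₂ v) :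
    Λ₁ = Λ₂ := by
  set Λ : (Fin n → ℝ) →ₗ[ℝ] CliffordAlgebra (Qneg n) := Λ₁ - Λ₂ with hΛ
  have h0 : ∑ j, CliffordAlgebra.ι (Qneg n) (Pi.single j 1) * Λ (Pi.single j 1) = 0 := by
    simp only [hΛ, LinearMap.sub_apply, mul_sub, Finset.sum_sub_distrib, h₁, h₂, sub_zero]
  have hker : ∀ v ∈ H, Λ v = 0 := by
    intro v hv
    simp [hΛ, sub_eq_zero, hagree v hv]
  -- it suffices to show Λ = 0
  suffices hΛ0 : Λ = 0 by
    have := sub_eq_zero.mp (by rw [← hΛ]; exact hΛ0)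
    exact this
  -- get a nonzero functional vanishing on H
  have hfr : Module.finrank ℝ (Fin n → ℝ) = n := Module.finrank_fin_fun ℝ
  have hHne : H < ⊤ := by
    refine lt_top_iff_ne_top.mpr fun h => ?_
    rw [h, finrank_top, hfr] at hH
    omega
  obtain ⟨f, hf0, hfH⟩ := Submodule.exists_dual_map_eq_bot_of_lt_top hHne inferInstance
  have hHle : H ≤ LinearMap.ker f := by
    intro x hx
    have : f x ∈ H.map f := Submodule.mem_map_of_mem hx
    rw [hfH] at this
    simpa using this
  -- ker f = H
  have hkerf : LinearMap.ker f = H := by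
    symm
    apply Submodule.eq_of_le_of_finrank_eq hHle
    have := Module.Dual.finrank_ker_add_one_of_ne_zero hf0
    rw [hfr] at this
    omega
  -- pick v' with f v' = 1
  obtain ⟨x₀, hx₀⟩ : ∃ x, f x ≠ 0 := by
    by_contra hc
    push_neg at hc
    exact hf0 (LinearMap.ext fun x => hc x)
  set v' : Fin n → ℝ := (f x₀)⁻¹ • x₀ with hv'
  have hfv' : f v' = 1 := by
    simp [hv', inv_mul_cancel₀ hx₀]
  set a : CliffordAlgebra (Qneg n) := Λ v' with ha
  have hΛx : ∀ x, Λ x = f x • a := by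
    intro x
    have hmem : x - f x • v' ∈ H := by
      rw [← hkerf]
      simp [LinearMap.mem_ker, hfv']
    have := hker _ hmem
    rw [map_sub, map_smul, sub_eq_zero] at this
    rw [this, ha]
  -- the vector w
  set w : Fin n → ℝ := fun i => f (Pi.single i 1) with hw
  have hwsum : w = ∑ j, f (Pi.single j 1) • (Pi.single j 1 : Fin n → ℝ) := by
    ext i
    rw [Finset.sum_apply]
    simp [hw, Pi.single_apply, mul_comm]
  have hιw : CliffordAlgebra.ι (Qneg n) w * a = 0 := by
    rw [hwsum, map_sum]
    rw [Finset.sum_mul]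
    calc ∑ j, (CliffordAlgebra.ι (Qneg n)) (f (Pi.single j 1) • (Pi.single j 1 : Fin n → ℝ)) * a
        = ∑ j, CliffordAlgebra.ι (Qneg n) (Pi.single j 1) * Λ (Pi.single j 1) := by
          refine Finset.sum_congr rfl fun j _ => ?_
          rw [map_smul, smul_mul_assoc, hΛx, mul_smul_comm]
      _ = 0 := h0
  -- Q w ≠ 0
  have hQw : Qneg n w ≠ 0 := by
    have hexp : Qneg n w = ∑ i, (-1 : ℝ) • (w i * w i) :=
      QuadraticMap.weightedSumSquares_apply _ w
    intro hc
    rw [hexp] at hc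
    have hc' : ∑ i, w i * w i = 0 := by
      have : -∑ i, w i * w i = 0 := by
        rw [← hc]; simp
      linarith [this]
    have hall : ∀ i ∈ Finset.univ, w i * w i = 0 :=
      (Finset.sum_eq_zero_iff_of_nonneg fun i _ => mul_self_nonneg (w i)).mp hc'
    have hwz : ∀ i, f (Pi.single i 1) = 0 := by
      intro i
      have := hall i (Finset.mem_univ i)
      have := mul_self_eq_zero.mp this
      simpa [hw] using this
    apply hf0
    apply LinearMap.pi_ext'
    intro i
    apply LinearMap.ext_ring
    simpa using hwz i
  -- conclude a = 0
  have ha0 : a = 0 := by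
    have := congrArg (fun z => CliffordAlgebra.ι (Qneg n) w * z) hιw
    simp only [mul_zero, ← mul_assoc] at this
    rw [CliffordAlgebra.ι_sq_scalar] at this
    rw [Algebra.algebraMap_eq_smul_one, smul_mul_assoc, one_mul] at this
    exact (smul_eq_zero.mp this).resolve_left hQw
  ext x
  simp [hΛx, ha0]
end

section
/- Let H ⊆ R^n be a hyperplane (an (n-1)-dimensional linear subspace) and λ : H → C(n) a real-linear map. Then there exists a real-linear extension Λ : R^n → C(n) of λ with D_L Λ := ∑_j e_j Λ(u_j) = 0. -/
/-!
Extend `λ` arbitrarily to `Λ₀`, and pick a nonzero functional `φ` vanishing on `H`.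
Adding `φ(·) a` to `Λ₀` keeps it an extension and changes `D_L` by `c a`, where
`c = ∑ⱼ φ(uⱼ) uⱼ` is a nonzero vector. Since `C(n)` is built from a definite form, `c` is
invertible, and `a = -c⁻¹ D_L Λ₀` makes `D_L` vanish.
-/

theorem Qneg_anisotropic (n : ℕ) : (Qneg n).Anisotropic := by
  intro x hx
  simp only [Qneg, QuadraticMap.weightedSumSquares_apply, neg_smul, one_smul,
    Finset.sum_neg_distrib, neg_eq_zero] at hx
  funext i
  exact mul_self_eq_zero.mp
    ((Finset.sum_eq_zero_iff_of_nonneg fun j _ => mul_self_nonneg (x j)).mp hx i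
      (Finset.mem_univ i))

theorem Module.Basis.sum_apply_smul_ne_zero {K V η : Type*} [Field K] [AddCommGroup V]
    [Module K V] [Fintype η] (b : Module.Basis η K V) {φ : V →ₗ[K] K} (hφ : φ ≠ 0) :
    ∑ i, φ (b i) • b i ≠ 0 := by
  intro h
  exact hφ (b.ext fun i => Fintype.linearIndependent_iff.mp b.linearIndependent _ h i)

namespace CliffordAlgebra

variable {K V η : Type*} [Field K] [AddCommGroup V] [Module K V] [Fintype η]
  {Q : QuadraticForm K V}

/-- The paper's `D_L Λ = ∑ⱼ eⱼ Λ(uⱼ)`, with the basis `b` in the role of `u`. -/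
noncomputable def diracL (b : Module.Basis η K V) (Λ : V →ₗ[K] CliffordAlgebra Q) :
    CliffordAlgebra Q :=
  ∑ i, ι Q (b i) * Λ (b i)

theorem diracL_add (b : Module.Basis η K V) (Λ Λ' : V →ₗ[K] CliffordAlgebra Q) :
    diracL b (Λ + Λ') = diracL b Λ + diracL b Λ' := by
  simp only [diracL, LinearMap.add_apply, mul_add, Finset.sum_add_distrib]

theorem diracL_smulRight (b : Module.Basis η K V) (φ : V →ₗ[K] K) (a : CliffordAlgebra Q) :
    diracL b (φ.smulRight a) = ι Q (∑ i, φ (b i) • b i) * a := by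
  simp only [diracL, LinearMap.smulRight_apply, map_sum, map_smul, Finset.sum_mul,
    mul_smul_comm, smul_mul_assoc]

theorem exists_extend_diracL_eq_zero (hQ : Q.Anisotropic) (b : Module.Basis η K V)
    {H : Submodule K V} (hH : H ≠ ⊤) (lam : H →ₗ[K] CliffordAlgebra Q) :
    ∃ Λ : V →ₗ[K] CliffordAlgebra Q, Λ ∘ₗ H.subtype = lam ∧ diracL b Λ = 0 := by
  obtain ⟨Λ₀, hΛ₀⟩ := lam.exists_extend
  obtain ⟨φ, hφ, hHφ⟩ := H.exists_le_ker_of_lt_top hH.lt_top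
  set c := ∑ i, φ (b i) • b i
  have hc : IsUnit (ι Q c) :=
    isUnit_ι_of_isUnit Q (isUnit_iff_ne_zero.mpr fun h => b.sum_apply_smul_ne_zero hφ (hQ c h))
  obtain ⟨a, ha⟩ : ∃ a, ι Q c * a = -diracL b Λ₀ :=
    ⟨↑hc.unit⁻¹ * -diracL b Λ₀, by rw [← mul_assoc, hc.mul_val_inv, one_mul]⟩
  refine ⟨Λ₀ + φ.smulRight a, ?_, ?_⟩
  · ext v
    simp [← hΛ₀, LinearMap.mem_ker.mp (hHφ v.2)]
  · rw [diracL_add, diracL_smulRight, ha, add_neg_cancel]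

end CliffordAlgebra

/-- Any linear map `λ` from a hyperplane `H ⊆ ℝⁿ` to `C(n)` extends to a linear map
`Λ : ℝⁿ → C(n)` with `D_L Λ = ∑ⱼ eⱼ Λ(uⱼ) = 0`. -/
theorem exists_linear_extension_diracL_zero {n : ℕ}
    (H : Submodule ℝ (Fin n → ℝ)) (hH : Module.finrank ℝ H = n - 1)
    (lam : H →ₗ[ℝ] CliffordAlgebra (Qneg n)) :
    ∃ Λ : (Fin n → ℝ) →ₗ[ℝ] CliffordAlgebra (Qneg n),
      (∀ v : H, Λ v = lam v) ∧
        ∑ j, CliffordAlgebra.ι (Qneg n) (Pi.single j 1) * Λ (Pi.single j 1) = 0 := by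
  rcases eq_or_ne H ⊤ with rfl | hH_ne_top
  · obtain rfl : n = 0 := by
      rw [finrank_top, Module.finrank_fin_fun] at hH
      omega
    obtain ⟨Λ, hΛ⟩ := lam.exists_extend
    exact ⟨Λ, fun v => LinearMap.congr_fun hΛ v, by simp⟩
  · obtain ⟨Λ, hΛ, hD⟩ :=
      CliffordAlgebra.exists_extend_diracL_eq_zero (Qneg_anisotropic n) (Pi.basisFun ℝ (Fin n))
        hH_ne_top lam
    exact ⟨Λ, fun v => LinearMap.congr_fun hΛ v, by simpa [CliffordAlgebra.diracL] using hD⟩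
end
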